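/- arXiv:1812.00112 — 5 statements merged into one kernel-verified Lean document; each statement's English description precedes it below -/
import Mathlib

section
/- Let U be a unitary operator on a Hilbert space H which does not have 1 as an eigenvalue. Then U − 1 has dense range, and the inverse Cayley transform c⁻¹(U) := i(U + 1)(U − 1)⁻¹, defined on the range of U − 1, is a densely defined self-adjoint operator. -/
/-!
The orthogonal complement of the range of `U - 1` is the kernel of `U⋆ - 1 = U⁻¹ - 1`, which is
the kernel of `U - 1`, hence zero. On `Uν - ν` the operator `T = c⁻¹(U)` satisfies
`(T - i)(Uν - ν) = 2iν` and `(T + i)(Uν - ν) = 2iUν`, so `T ∓ i` are onto because `U` is,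
and `T` is symmetric because `U` is isometric. Self-adjointness then follows from the basic
criterion: a densely defined symmetric `T` with `T - μ` and `T - μ̄` onto is self-adjoint.
-/

open LinearPMap ComplexConjugate Complex

namespace LinearPMap

variable {𝕜 E : Type*} [RCLike 𝕜] [NormedAddCommGroup E] [InnerProductSpace 𝕜 E]

theorem IsFormalAdjoint.inner_sub_smul_left {S T : E →ₗ.[𝕜] E} (h : S.IsFormalAdjoint T)
    (μ : 𝕜) (x : S.domain) (y : T.domain) :
    inner 𝕜 (S x - μ • (x : E)) y = inner 𝕜 (x : E) (T y - conj μ • (y : E)) := by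
  rw [inner_sub_left, inner_sub_right, h, inner_smul_left, inner_smul_right]

theorem isSelfAdjoint_of_surjective_sub_smul [CompleteSpace E] {T : E →ₗ.[𝕜] E}
    (hT : Dense (T.domain : Set E)) (hsymm : T.IsFormalAdjoint T) (μ : 𝕜)
    (hμ : Function.Surjective fun x : T.domain => T x - μ • (x : E))
    (hμ' : Function.Surjective fun x : T.domain => T x - conj μ • (x : E)) :
    IsSelfAdjoint T := by
  rw [isSelfAdjoint_def]
  refine le_antisymm (le_of_eqLocus_ge fun z hz => ?_) (hsymm.le_adjoint hT)
  obtain ⟨w, hw⟩ : ∃ w : T.domain, T w - μ • (w : E) = T† ⟨z, hz⟩ - μ • z :=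
    hμ (T† ⟨z, hz⟩ - μ • z)
  have horth : ∀ v : T.domain, inner 𝕜 (z - w) (T v - conj μ • (v : E)) = 0 := fun v => by
    rw [inner_sub_left, ← (adjoint_isFormalAdjoint hT).inner_sub_smul_left μ ⟨z, hz⟩ v,
      ← hsymm.inner_sub_smul_left μ w v, hw, sub_self]
  -- `z - w` is orthogonal to the range of `T - conj μ`, which is everything
  obtain ⟨v, hv⟩ : ∃ v : T.domain, T v - conj μ • (v : E) = z - w := hμ' (z - w)
  obtain rfl : z = w := sub_eq_zero.mp (inner_self_eq_zero.mp (hv ▸ horth v))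
  exact ⟨hz, w.2, (sub_left_injective hw).symm⟩

end LinearPMap

theorem LinearIsometryEquiv.dense_range_sub_self {𝕜 E : Type*} [RCLike 𝕜] [NormedAddCommGroup E]
    [InnerProductSpace 𝕜 E] [CompleteSpace E] (U : E ≃ₗᵢ[𝕜] E) (hU : ∀ x, U x = x → x = 0) :
    Dense (Set.range fun x => U x - x) := by
  set A : E →L[𝕜] E := (U : E →L[𝕜] E) - 1
  have hrange : (A.range : Set E) = Set.range fun x => U x - x := by
    ext
    simp [A]
  have hker : A.adjoint.ker = ⊥ := by
    refine (Submodule.eq_bot_iff _).mpr fun x hx => hU x ?_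
    have : U.symm x = x := by
      simpa [A, map_sub, ContinuousLinearMap.adjoint_one, sub_eq_zero] using hx
    exact (U.symm_apply_eq.mp this).symm
  rw [← hrange, Submodule.dense_iff_topologicalClosure_eq_top,
    Submodule.topologicalClosure_eq_top_iff, A.orthogonal_range, hker]

section InvCayley

variable {E : Type*} [AddCommGroup E] [Module ℂ E]

/-- The inverse Cayley transform `c⁻¹(U) = i(U + 1)(U - 1)⁻¹` on the range of `U - 1`. -/
noncomputable def invCayley (U : E →ₗ[ℂ] E) (hU : Function.Injective (U - 1 : E →ₗ[ℂ] E)) :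
    E →ₗ.[ℂ] E where
  domain := LinearMap.range (U - 1)
  toFun := (I • (U + 1)) ∘ₗ (LinearEquiv.ofInjective _ hU).symm.toLinearMap

variable (U : E →ₗ[ℂ] E) (hU : Function.Injective (U - 1 : E →ₗ[ℂ] E))

theorem invCayley_domain : (invCayley U hU).domain = LinearMap.range (U - 1) := rfl

theorem invCayley_apply_sub_self (x : E) (hx : U x - x ∈ (invCayley U hU).domain) :
    invCayley U hU ⟨U x - x, hx⟩ = I • (U x + x) := by
  have : (⟨U x - x, hx⟩ : (invCayley U hU).domain) = LinearEquiv.ofInjective _ hU x := rfl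
  rw [this]
  show (I • (U + 1)) ((LinearEquiv.ofInjective _ hU).symm _) = _
  simp

theorem sub_self_mem_invCayley_domain (x : E) : U x - x ∈ (invCayley U hU).domain :=
  ⟨x, rfl⟩

theorem invCayley_domain_induction {P : (invCayley U hU).domain → Prop}
    (h : ∀ x hx, P ⟨U x - x, hx⟩) (y : (invCayley U hU).domain) : P y := by
  obtain ⟨_, x, rfl⟩ := y
  exact h x _

theorem invCayley_apply_sub_self_sub_I_smul (x : E) (hx : U x - x ∈ (invCayley U hU).domain) :
    invCayley U hU ⟨U x - x, hx⟩ - I • (U x - x) = (2 * I) • x := by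
  rw [invCayley_apply_sub_self, ← smul_sub, add_sub_sub_cancel, ← two_smul ℂ x, smul_smul,
    mul_comm]

theorem invCayley_apply_sub_self_add_I_smul (x : E) (hx : U x - x ∈ (invCayley U hU).domain) :
    invCayley U hU ⟨U x - x, hx⟩ + I • (U x - x) = (2 * I) • U x := by
  rw [invCayley_apply_sub_self, ← smul_add, add_add_sub_cancel, ← two_smul ℂ (U x), smul_smul,
    mul_comm]

theorem invCayley_sub_I_smul_surjective :
    Function.Surjective fun y : (invCayley U hU).domain => invCayley U hU y - I • (y : E) := by
  intro z
  refine ⟨⟨_, sub_self_mem_invCayley_domain U hU ((2 * I)⁻¹ • z)⟩, ?_⟩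
  exact (invCayley_apply_sub_self_sub_I_smul U hU _ _).trans (smul_inv_smul₀ (by simp) z)

theorem invCayley_add_I_smul_surjective (hU' : Function.Surjective U) :
    Function.Surjective fun y : (invCayley U hU).domain => invCayley U hU y + I • (y : E) := by
  intro z
  obtain ⟨x, hx⟩ := hU' ((2 * I)⁻¹ • z)
  refine ⟨⟨_, sub_self_mem_invCayley_domain U hU x⟩, ?_⟩
  refine (invCayley_apply_sub_self_add_I_smul U hU _ _).trans ?_
  rw [hx, smul_inv_smul₀ (by simp)]

end InvCayley

theorem invCayley_isFormalAdjoint {H : Type*} [NormedAddCommGroup H] [InnerProductSpace ℂ H]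
    (U : H →ₗᵢ[ℂ] H) (hU : Function.Injective (U.toLinearMap - 1 : H →ₗ[ℂ] H)) :
    (invCayley U.toLinearMap hU).IsFormalAdjoint (invCayley U.toLinearMap hU) := by
  intro y y'
  induction y using invCayley_domain_induction with | h x hx => ?_
  induction y' using invCayley_domain_induction with | h x' hx' => ?_
  rw [invCayley_apply_sub_self, invCayley_apply_sub_self]
  simp only [LinearIsometry.coe_toLinearMap, inner_smul_left, inner_smul_right, inner_add_left,
    inner_sub_left, inner_add_right, inner_sub_right, U.inner_map_map, conj_I]
  ring

theorem stmt4 {H : Type*} [NormedAddCommGroup H] [InnerProductSpace ℂ H] [CompleteSpace H]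
    (U : H ≃ₗᵢ[ℂ] H) (h1 : ∀ x : H, U x = x → x = 0) :
    Dense (Set.range fun ν : H => U ν - ν) ∧
    ∃ T : H →ₗ.[ℂ] H,
      (T.domain : Set H) = Set.range (fun ν : H => U ν - ν) ∧
      (∀ (ν : H) (hν : U ν - ν ∈ T.domain),
        T ⟨U ν - ν, hν⟩ = Complex.I • (U ν + ν)) ∧
      IsSelfAdjoint T := by
  have hinj : Function.Injective (U.toLinearIsometry.toLinearMap - 1 : H →ₗ[ℂ] H) :=
    (injective_iff_map_eq_zero _).mpr fun x hx => h1 x (sub_eq_zero.mp hx)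
  set T := invCayley U.toLinearIsometry.toLinearMap hinj
  have hdense := U.dense_range_sub_self h1
  have hdomain : (T.domain : Set H) = Set.range fun ν => U ν - ν := by
    ext; simp [T, invCayley_domain]
  refine ⟨hdense, T, hdomain, invCayley_apply_sub_self _ hinj, ?_⟩
  refine isSelfAdjoint_of_surjective_sub_smul (hdomain ▸ hdense)
    (invCayley_isFormalAdjoint _ hinj) I (invCayley_sub_I_smul_surjective _ hinj) ?_
  simpa only [conj_I, neg_smul, sub_neg_eq_add] using
    invCayley_add_I_smul_surjective _ hinj U.surjective
end

section
/- The Cayley transform D ↦ (D + i)(D − i)⁻¹ is a bijection from the set of densely defined self-adjoint unbounded operators on a Hilbert space H to the set of unitary operators on H which do not have 1 as an eigenvalue, with inverse U ↦ i(U + 1)(U − 1)⁻¹. -/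
/-!
For a symmetric operator `D` and non-real `c`,
`‖(D + c)ξ‖² = ‖(D + Re c)ξ‖² + (Im c)² ‖ξ‖²`, so `D + c` is injective, with closed range when
`D` is closed. If `D` is self-adjoint, a vector orthogonal to that range is an eigenvector of
`D† = D` for the non-real eigenvalue `-c̄`, hence zero. So `D ± i` map the domain bijectively
onto `H`, `‖(D + i)ξ‖ = ‖(D - i)ξ‖`, and `(D + i)(D - i)⁻¹` is unitary.

Both transforms are governed by the subspace `{(Uν - ν, i(Uν + ν))}` of `H × H`. It is the graph
of `D` when `U` is the Cayley transform of `D` (put `ν = (D - i)ξ`), and it determines `U`.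
Conversely, for unitary `U` this subspace is its own adjoint, its first projection
`range (U - 1)` is dense because `range (U - 1)ᗮ = ker (U* - 1) = ker (U - 1)`, and it is a
graph when `1` is not an eigenvalue; so it is the graph of a self-adjoint operator.
-/

open scoped InnerProductSpace ComplexConjugate LinearPMap
open Complex Filter Topology

theorem ContinuousLinearMap.eq_apply_of_forall_inner_apply_left {E : Type*}
    [NormedAddCommGroup E] [InnerProductSpace ℂ E] [CompleteSpace E] {U : E →L[ℂ] E}
    (hU : U ∈ unitary (E →L[ℂ] E)) {a b : E} (h : ∀ ν, ⟪U ν, a⟫_ℂ = ⟪ν, b⟫_ℂ) : a = U b := by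
  have hstar : star U a = b := ext_inner_left ℂ fun ν => by
    rw [ContinuousLinearMap.star_eq_adjoint, ContinuousLinearMap.adjoint_inner_right, h]
  rw [← hstar]
  exact congr($(Unitary.mul_star_self_of_mem hU) a).symm

namespace LinearPMap

section Shift

variable {R E : Type*} [CommRing R] [AddCommGroup E] [Module R E]

def shift (D : E →ₗ.[R] E) (c : R) : D.domain →ₗ[R] E := D.toFun + c • D.domain.subtype

@[simp]
theorem shift_apply (D : E →ₗ.[R] E) (c : R) (ξ : D.domain) :
    D.shift c ξ = D ξ + c • (ξ : E) :=
  rfl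

end Shift

section Closed

variable {𝕜 E : Type*} [NormedField 𝕜] [NormedAddCommGroup E] [NormedSpace 𝕜 E]
  [CompleteSpace E] {D : E →ₗ.[𝕜] E} {c : 𝕜}

theorem IsClosed.isClosed_range_shift (hD : D.IsClosed) {K : ℝ}
    (hK : ∀ ξ : D.domain, ‖(ξ : E)‖ ≤ K * ‖D.shift c ξ‖) :
    _root_.IsClosed (LinearMap.range (D.shift c) : Set E) := by
  refine IsSeqClosed.isClosed fun y z hy hyz => ?_
  choose ξ hξ using hy
  have hcauchy : CauchySeq fun n => (ξ n : E) := by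
    have hy := cauchySeq_iff_tendsto_dist_atTop_0.1 hyz.cauchySeq
    refine cauchySeq_iff_tendsto_dist_atTop_0.2 <|
      squeeze_zero (fun _ => dist_nonneg) (fun p => ?_) (by simpa using hy.const_mul K)
    have h := hK (ξ p.1 - ξ p.2)
    rwa [LinearMap.map_sub, hξ, hξ, Submodule.coe_sub, ← dist_eq_norm, ← dist_eq_norm] at h
  obtain ⟨x, hx⟩ := cauchySeq_tendsto_of_complete hcauchy
  have hDx : Tendsto (fun n => D (ξ n)) atTop (𝓝 (z - c • x)) := by
    convert hyz.sub (hx.const_smul c) using 2 with n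
    simp [← hξ]
  have hmem : (x, z - c • x) ∈ D.graph :=
    hD.mem_of_tendsto (hx.prodMk_nhds hDx) (Eventually.of_forall fun n => D.mem_graph (ξ n))
  obtain ⟨η, rfl, hη⟩ := D.mem_graph_iff.1 hmem
  exact ⟨η, by simp [hη]⟩

end Closed

variable {E : Type*} [NormedAddCommGroup E] [InnerProductSpace ℂ E]

section Symmetric

variable {D : E →ₗ.[ℂ] E} (hD : D.IsFormalAdjoint D)
include hD

theorem IsFormalAdjoint.im_inner_apply_self (ξ : D.domain) : (⟪D ξ, ξ⟫_ℂ).im = 0 :=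
  conj_eq_iff_im.1 <| by rw [inner_conj_symm, hD ξ ξ]

theorem IsFormalAdjoint.norm_shift_sq (c : ℂ) (ξ : D.domain) :
    ‖D.shift c ξ‖ ^ 2 = ‖D.shift c.re ξ‖ ^ 2 + c.im ^ 2 * ‖(ξ : E)‖ ^ 2 := by
  have hsplit : D.shift c ξ = D.shift c.re ξ + (c.im * I) • (ξ : E) := by
    conv_lhs => rw [← re_add_im c]
    simp only [shift_apply, add_smul, add_assoc]
  have hre : RCLike.re ⟪D.shift c.re ξ, (c.im * I) • (ξ : E)⟫_ℂ = 0 := by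
    have him : (⟪D.shift c.re ξ, (ξ : E)⟫_ℂ).im = 0 := by
      rw [shift_apply, inner_add_left, inner_smul_left, inner_self_eq_norm_sq_to_K]
      simp [hD.im_inner_apply_self ξ, ← ofReal_pow]
    rw [inner_smul_right, RCLike.re_to_complex, mul_re, him]
    simp
  rw [hsplit, norm_add_sq (𝕜 := ℂ), hre, norm_smul, mul_pow]
  simp

theorem IsFormalAdjoint.norm_shift_conj (c : ℂ) (ξ : D.domain) :
    ‖D.shift (conj c) ξ‖ = ‖D.shift c ξ‖ := by
  rw [← sq_eq_sq₀ (norm_nonneg _) (norm_nonneg _), hD.norm_shift_sq, hD.norm_shift_sq c]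
  simp

theorem IsFormalAdjoint.abs_im_mul_norm_le_norm_shift (c : ℂ) (ξ : D.domain) :
    |c.im| * ‖(ξ : E)‖ ≤ ‖D.shift c ξ‖ := by
  refine (pow_le_pow_iff_left₀ (by positivity) (norm_nonneg _) two_ne_zero).1 ?_
  rw [hD.norm_shift_sq, mul_pow, sq_abs]
  exact le_add_of_nonneg_left (sq_nonneg _)

theorem IsFormalAdjoint.injective_shift {c : ℂ} (hc : c.im ≠ 0) :
    Function.Injective (D.shift c) := by
  refine (injective_iff_map_eq_zero _).2 fun ξ hξ => Subtype.ext ?_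
  have h := hD.abs_im_mul_norm_le_norm_shift c ξ
  rw [hξ, norm_zero] at h
  exact norm_le_zero_iff.1 <| nonpos_of_mul_nonpos_right h (abs_pos.2 hc)

end Symmetric

section CayleyGraph

variable {U : E →L[ℂ] E}

/-- The graph of `i (U + 1) (U - 1)⁻¹`, parametrized by `ν ↦ (U ν - ν, i (U ν + ν))`; it is the
graph of a map only when `1` is not an eigenvalue of `U` (otherwise `invCayley U` is junk). -/
def cayleyGraph (U : E →L[ℂ] E) : Submodule ℂ (E × E) :=
  LinearMap.range ((U - 1).prod (I • (U + 1)) : E →ₗ[ℂ] E × E)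

noncomputable def invCayley (U : E →L[ℂ] E) : E →ₗ.[ℂ] E :=
  (cayleyGraph U).toLinearPMap

theorem mem_cayleyGraph {p : E × E} :
    p ∈ cayleyGraph U ↔ ∃ ν, (U ν - ν, I • (U ν + ν)) = p := by
  simp [cayleyGraph]

theorem eq_of_cayleyGraph_le {V : E →L[ℂ] E} (h : cayleyGraph U ≤ cayleyGraph V) : U = V := by
  ext ν
  obtain ⟨μ, hμ⟩ := mem_cayleyGraph.1 (h (mem_cayleyGraph.2 ⟨ν, rfl⟩))
  obtain ⟨hsub, hadd⟩ := Prod.mk.inj hμ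
  rw [smul_right_inj I_ne_zero] at hadd
  have hμν : μ = ν := by
    refine smul_right_injective E (two_ne_zero (α := ℂ)) ?_
    linear_combination (norm := module) hadd - hsub
  rw [hμν] at hadd
  exact (add_right_cancel hadd).symm

theorem graph_invCayley (hfix : ∀ x : E, U x = x → x = 0) :
    (invCayley U).graph = cayleyGraph U := by
  refine Submodule.toLinearPMap_graph_eq _ fun p hp hp1 => ?_
  obtain ⟨ν, rfl⟩ := mem_cayleyGraph.1 hp
  rw [hfix ν (sub_eq_zero.1 hp1)]
  simp

theorem invCayley_apply_sub_self (hfix : ∀ x : E, U x = x → x = 0) (ν : E) :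
    ∃ h : U ν - ν ∈ (invCayley U).domain, invCayley U ⟨U ν - ν, h⟩ = I • (U ν + ν) := by
  have hmem : (U ν - ν, I • (U ν + ν)) ∈ (invCayley U).graph :=
    (graph_invCayley hfix).symm ▸ mem_cayleyGraph.2 ⟨ν, rfl⟩
  exact ⟨mem_domain_of_mem_graph hmem, ((image_iff _).2 hmem).symm⟩

end CayleyGraph

variable [CompleteSpace E]

theorem mem_adjoint_graph_of_mem_orthogonal_range_shift {T : E →ₗ.[ℂ] E}
    (hT : Dense (T.domain : Set E)) {c : ℂ} {x : E}
    (hx : x ∈ (LinearMap.range (T.shift c))ᗮ) : (x, -(conj c • x)) ∈ T†.graph := by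
  rw [adjoint_graph_eq_graph_adjoint hT, Submodule.mem_adjoint_iff]
  rintro a b hab
  obtain ⟨ξ, rfl, rfl⟩ := T.mem_graph_iff.1 hab
  have h := Submodule.inner_right_of_mem_orthogonal (LinearMap.mem_range_self _ ξ) hx
  rw [shift_apply, inner_add_left, inner_smul_left] at h
  rw [inner_neg_right, inner_smul_right]
  linear_combination h

theorem cayleyGraph_adjoint {U : E →L[ℂ] E} (hU : U ∈ unitary (E →L[ℂ] E)) :
    (cayleyGraph U).adjoint = cayleyGraph U := by
  ext ⟨y, z⟩
  rw [Submodule.mem_adjoint_iff]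
  constructor
  · intro h
    have hz : z + I • y = U (z - I • y) :=
      ContinuousLinearMap.eq_apply_of_forall_inner_apply_left hU fun ν => by
        have h' := h _ _ (mem_cayleyGraph.2 ⟨ν, rfl⟩)
        simp only [inner_add_left, inner_sub_left, inner_smul_left, inner_add_right,
          inner_sub_right, inner_smul_right, conj_I] at h' ⊢
        linear_combination -h'
    rw [← Submodule.smul_mem_iff _ (by simp : (2 * I : ℂ) ≠ 0), mem_cayleyGraph]
    refine ⟨z - I • y, ?_⟩
    rw [← hz, Prod.smul_mk]
    congr 1 <;> module
  · intro hyz a b hab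
    obtain ⟨μ, hμ⟩ := mem_cayleyGraph.1 hyz
    obtain ⟨ν, hν⟩ := mem_cayleyGraph.1 hab
    cases hμ
    cases hν
    simp only [inner_add_left, inner_sub_left, inner_smul_left, inner_add_right,
      inner_sub_right, inner_smul_right, conj_I]
    linear_combination (-2 * I) * ContinuousLinearMap.inner_map_map_of_mem_unitary hU ν μ

section InverseCayley

variable {U : E →L[ℂ] E} (hU : U ∈ unitary (E →L[ℂ] E)) (hfix : ∀ x : E, U x = x → x = 0)
include hU hfix

theorem dense_domain_invCayley : Dense ((invCayley U).domain : Set E) := by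
  rw [Submodule.dense_iff_topologicalClosure_eq_top, Submodule.topologicalClosure_eq_top_iff,
    Submodule.eq_bot_iff]
  intro x hx
  refine hfix x (ContinuousLinearMap.eq_apply_of_forall_inner_apply_left hU fun ν => ?_).symm
  have hmem : U ν - ν ∈ (invCayley U).domain :=
    Submodule.mem_map.2 ⟨_, mem_cayleyGraph.2 ⟨ν, rfl⟩, rfl⟩
  have h := Submodule.inner_right_of_mem_orthogonal hmem hx
  rwa [inner_sub_left, sub_eq_zero] at h

theorem isSelfAdjoint_invCayley : IsSelfAdjoint (invCayley U) := by
  rw [isSelfAdjoint_def]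
  refine eq_of_eq_graph ?_
  rw [adjoint_graph_eq_graph_adjoint (dense_domain_invCayley hU hfix), graph_invCayley hfix,
    cayleyGraph_adjoint hU]

end InverseCayley

section SelfAdjoint

variable {D : E →ₗ.[ℂ] E} (hD : IsSelfAdjoint D)
include hD

theorem _root_.IsSelfAdjoint.isFormalAdjoint : D.IsFormalAdjoint D := by
  simpa only [isSelfAdjoint_def.1 hD] using adjoint_isFormalAdjoint hD.dense_domain (T := D)

theorem _root_.IsSelfAdjoint.range_shift_eq_top {c : ℂ} (hc : c.im ≠ 0) :
    LinearMap.range (D.shift c) = ⊤ := by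
  have hclosed : _root_.IsClosed (LinearMap.range (D.shift c) : Set E) :=
    hD.isClosed.isClosed_range_shift fun ξ =>
      (le_inv_mul_iff₀ (abs_pos.2 hc)).2 (hD.isFormalAdjoint.abs_im_mul_norm_le_norm_shift c ξ)
  rw [← hclosed.submodule_topologicalClosure_eq, Submodule.topologicalClosure_eq_top_iff,
    Submodule.eq_bot_iff]
  intro x hx
  have hgraph := mem_adjoint_graph_of_mem_orthogonal_range_shift hD.dense_domain hx
  rw [isSelfAdjoint_def.1 hD, mem_graph_iff] at hgraph
  obtain ⟨ξ, rfl, hξ⟩ := hgraph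
  have hker : D.shift (conj c) ξ = D.shift (conj c) 0 := by simp [hξ]
  rw [hD.isFormalAdjoint.injective_shift (by simpa using hc) hker, Submodule.coe_zero]

theorem _root_.IsSelfAdjoint.bijective_shift {c : ℂ} (hc : c.im ≠ 0) :
    Function.Bijective (D.shift c) :=
  ⟨hD.isFormalAdjoint.injective_shift hc, LinearMap.range_eq_top.1 (hD.range_shift_eq_top hc)⟩

noncomputable def cayley : unitary (E →L[ℂ] E) :=
  Unitary.linearIsometryEquiv.symm
    { toLinearEquiv :=
        (LinearEquiv.ofBijective _ (hD.bijective_shift (c := -I) (by simp))).symm.trans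
          (LinearEquiv.ofBijective _ (hD.bijective_shift (c := I) (by simp)))
      norm_map' := fun x => by
        obtain ⟨ξ, rfl⟩ := (hD.bijective_shift (c := -I) (by simp)).2 x
        simpa only [LinearEquiv.coe_coe, LinearEquiv.trans_apply,
          LinearEquiv.ofBijective_symm_apply_apply, LinearEquiv.ofBijective_apply, conj_neg_I]
          using hD.isFormalAdjoint.norm_shift_conj (-I) ξ }

theorem cayley_apply_shift (ξ : D.domain) :
    (cayley hD : E →L[ℂ] E) (D.shift (-I) ξ) = D.shift I ξ := by
  simp only [cayley, Unitary.coe_symm_linearIsometryEquiv_apply]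
  exact congrArg (D.shift I) (LinearEquiv.ofBijective_symm_apply_apply _ ξ)

theorem _root_.IsSelfAdjoint.graph_eq_cayleyGraph_cayley : D.graph = cayleyGraph (cayley hD) := by
  have key (ξ : D.domain) : ((cayley hD : E →L[ℂ] E) (D.shift (-I) ξ) - D.shift (-I) ξ,
      I • ((cayley hD : E →L[ℂ] E) (D.shift (-I) ξ) + D.shift (-I) ξ)) =
      (2 * I) • ((ξ : E), D ξ) := by
    rw [cayley_apply_shift, shift_apply, shift_apply, Prod.smul_mk]
    congr 1 <;> module
  ext p
  constructor
  · intro hp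
    obtain ⟨ξ, hξ1, hξ2⟩ := D.mem_graph_iff.1 hp
    rw [← Submodule.smul_mem_iff _ (by simp : (2 * I : ℂ) ≠ 0), mem_cayleyGraph]
    exact ⟨_, (key ξ).trans (by rw [hξ1, hξ2])⟩
  · rw [mem_cayleyGraph]
    rintro ⟨ν, rfl⟩
    obtain ⟨ξ, rfl⟩ := (hD.bijective_shift (c := -I) (by simp)).2 ν
    rw [key]
    exact Submodule.smul_mem _ _ (D.mem_graph ξ)

theorem _root_.IsSelfAdjoint.eq_zero_of_cayley_apply_eq_self {x : E}
    (hx : (cayley hD : E →L[ℂ] E) x = x) : x = 0 := by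
  have hmem : ((cayley hD : E →L[ℂ] E) x - x, I • ((cayley hD : E →L[ℂ] E) x + x)) ∈ D.graph :=
    hD.graph_eq_cayleyGraph_cayley ▸ mem_cayleyGraph.2 ⟨x, rfl⟩
  have h := D.graph_fst_eq_zero_snd hmem (sub_eq_zero.2 hx)
  rw [hx, ← two_smul ℂ x, smul_smul, smul_eq_zero] at h
  simpa [I_ne_zero] using h

theorem _root_.IsSelfAdjoint.invCayley_cayley : invCayley (cayley hD : E →L[ℂ] E) = D :=
  eq_of_eq_graph <| by
    rw [graph_invCayley fun _ => hD.eq_zero_of_cayley_apply_eq_self,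
      ← hD.graph_eq_cayleyGraph_cayley]

end SelfAdjoint

theorem cayley_invCayley {U : E →L[ℂ] E} (hU : U ∈ unitary (E →L[ℂ] E))
    (hfix : ∀ x : E, U x = x → x = 0) :
    (cayley (isSelfAdjoint_invCayley hU hfix) : E →L[ℂ] E) = U :=
  eq_of_cayleyGraph_le <| by
    rw [← (isSelfAdjoint_invCayley hU hfix).graph_eq_cayleyGraph_cayley, graph_invCayley hfix]

noncomputable def cayleyEquiv :
    {D : E →ₗ.[ℂ] E // Dense (D.domain : Set E) ∧ IsSelfAdjoint D} ≃
      {U : E →L[ℂ] E // U ∈ unitary (E →L[ℂ] E) ∧ ∀ x : E, U x = x → x = 0} where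
  toFun D := ⟨cayley D.2.2, (cayley D.2.2).2, fun _ => D.2.2.eq_zero_of_cayley_apply_eq_self⟩
  invFun U :=
    ⟨invCayley U.1, dense_domain_invCayley U.2.1 U.2.2, isSelfAdjoint_invCayley U.2.1 U.2.2⟩
  left_inv D := Subtype.ext D.2.2.invCayley_cayley
  right_inv U := Subtype.ext (cayley_invCayley U.2.1 U.2.2)

end LinearPMap

theorem stmt5 {H : Type*} [NormedAddCommGroup H] [InnerProductSpace ℂ H] [CompleteSpace H] :
    ∃ e : {D : H →ₗ.[ℂ] H // Dense (D.domain : Set H) ∧ IsSelfAdjoint D} ≃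
          {U : H →L[ℂ] H // U ∈ unitary (H →L[ℂ] H) ∧ ∀ x : H, U x = x → x = 0},
      (∀ (D : {D : H →ₗ.[ℂ] H // Dense (D.domain : Set H) ∧ IsSelfAdjoint D})
          (ξ : D.1.domain),
          (e D).1 (D.1 ξ - Complex.I • (ξ : H)) = D.1 ξ + Complex.I • (ξ : H)) ∧
      (∀ (U : {U : H →L[ℂ] H // U ∈ unitary (H →L[ℂ] H) ∧ ∀ x : H, U x = x → x = 0})
          (ν : H),
          ∃ hν : U.1 ν - ν ∈ (e.symm U).1.domain,
            (e.symm U).1 ⟨U.1 ν - ν, hν⟩ = Complex.I • (U.1 ν + ν)) := by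
  refine ⟨LinearPMap.cayleyEquiv, fun D ξ => ?_,
    fun U ν => LinearPMap.invCayley_apply_sub_self U.2.2 ν⟩
  have h := LinearPMap.cayley_apply_shift D.2.2 ξ
  rwa [LinearPMap.shift_apply, LinearPMap.shift_apply, neg_smul, ← sub_eq_add_neg] at h
end

section
/- Let D be an essentially self-adjoint unbounded operator on a Hilbert space H and T a bounded operator that preserves dom D and satisfies TD = −DT on dom D. Then for every odd bounded continuous function f : ℝ → ℂ we have T f(D) = −f(D) T, and for every even bounded continuous function f we have T f(D) = f(D) T. -/
/-!
Put `ψ x = (i + x)⁻¹`, so that `Φ ψ` inverts `D + i` and, by the resolvent identity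
`ψ̄ = ψ + 2i ψ ψ̄`, `Φ ψ̄` inverts `D - i`. On the dense range of `D ± i` the relation
`TD = -DT` turns into `T Φ(ψ) = -Φ(ψ̄) T` and `T Φ(ψ̄) = -Φ(ψ) T`, i.e. `T Φ(g) = Φ(g ∘ neg) T`
for `g = ψ, ψ̄`. The functions `g` with this property form a subalgebra which is closed under
bounded pointwise limits. Since `ψ` extends to an injective function on the one-point
compactification of `ℝ`, Stone–Weierstrass puts every function vanishing at infinity into it,
and multiplying by cutoffs gives all of `ℝ →ᵇ ℂ`. Finally `f ∘ neg` is `-f` for odd and `f`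
for even `f`.
-/

open Filter Topology Complex BoundedContinuousFunction
open scoped InnerProductSpace ComplexConjugate

noncomputable section

def Subalgebra.intertwining {R A B : Type*} [CommSemiring R] [Semiring A] [Semiring B]
    [Algebra R A] [Algebra R B] (φ₁ φ₂ : A →ₐ[R] B) (b : B) : Subalgebra R A where
  carrier := {a | b * φ₁ a = φ₂ a * b}
  mul_mem' {x y} (hx : b * φ₁ x = φ₂ x * b) (hy : b * φ₁ y = φ₂ y * b) := by
    change b * φ₁ (x * y) = φ₂ (x * y) * b
    rw [map_mul, map_mul, ← mul_assoc, hx, mul_assoc, hy, mul_assoc]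
  add_mem' hx hy := by simp_all [mul_add, add_mul]
  algebraMap_mem' r := by simp [Algebra.commutes]

theorem Subalgebra.mem_intertwining {R A B : Type*} [CommSemiring R] [Semiring A] [Semiring B]
    [Algebra R A] [Algebra R B] {φ₁ φ₂ : A →ₐ[R] B} {b : B} {a : A} :
    a ∈ Subalgebra.intertwining φ₁ φ₂ b ↔ b * φ₁ a = φ₂ a * b := Iff.rfl

theorem mul_one_sub_smul_eq {R A : Type*} [CommSemiring R] [Ring A] [Algebra R A] {a b : A}
    (r : R) (hcomm : b * a = a * b) (h : b = a + r • (a * b)) : b * (1 - r • a) = a := by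
  rw [mul_sub, mul_one, mul_smul_comm, hcomm]
  exact sub_eq_of_eq_add h

theorem Complex.I_add_ofReal_ne_zero (x : ℝ) : I + x ≠ 0 := by
  simp [Complex.ext_iff]

namespace BoundedContinuousFunction

section BoundedPointwise

variable {X E : Type*} [TopologicalSpace X] [SeminormedAddCommGroup E]

def IsClosedUnderBoundedPointwiseLimits (s : Set (X →ᵇ E)) : Prop :=
  ∀ (u : ℕ → X →ᵇ E) (g : X →ᵇ E) (C : ℝ), (∀ n, ‖u n‖ ≤ C) →
    (∀ x, Tendsto (fun n => u n x) atTop (𝓝 (g x))) → (∀ n, u n ∈ s) → g ∈ s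

theorem IsClosedUnderBoundedPointwiseLimits.isClosed {s : Set (X →ᵇ E)}
    (hs : IsClosedUnderBoundedPointwiseLimits s) : IsClosed s := by
  refine IsSeqClosed.isClosed fun u g hu hug => ?_
  obtain ⟨C, hC⟩ := isBounded_iff_forall_norm_le.1 (Metric.isBounded_range_of_tendsto u hug)
  exact hs u g C (fun n => hC _ ⟨n, rfl⟩)
    (fun x => ((continuous_eval_const x).tendsto g).comp hug) hu

end BoundedPointwise

section OnePoint

variable (X 𝕜 : Type*) [TopologicalSpace X] [RCLike 𝕜]

def restrictOnePoint : C(OnePoint X, 𝕜) →⋆ₐ[𝕜] (X →ᵇ 𝕜) where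
  toFun F := (mkOfCompact F).compContinuous ⟨(↑), OnePoint.continuous_coe⟩
  map_one' := rfl
  map_mul' _ _ := rfl
  map_zero' := rfl
  map_add' _ _ := rfl
  commutes' _ := rfl
  map_star' _ := rfl

variable {X 𝕜}

theorem continuous_restrictOnePoint : Continuous (restrictOnePoint X 𝕜) :=
  (continuous_compContinuous _).comp
    (ContinuousMap.isometryEquivBoundedOfCompact (OnePoint X) 𝕜).continuous

theorem exists_restrictOnePoint_eq_of_tendsto (g : X →ᵇ 𝕜) {c : 𝕜}
    (hg : Tendsto g (coclosedCompact X) (𝓝 c)) : ∃ F, restrictOnePoint X 𝕜 F = g :=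
  ⟨OnePoint.continuousMapMk g.toContinuousMap c hg, rfl⟩

theorem restrictOnePoint_mem {A : Subalgebra 𝕜 (X →ᵇ 𝕜)} (hA : IsClosed (A : Set (X →ᵇ 𝕜)))
    {ψ : X →ᵇ 𝕜} (hψ_inj : Function.Injective ψ) (hψ_ne : ∀ x, ψ x ≠ 0)
    (hψ_lim : Tendsto ψ (coclosedCompact X) (𝓝 0)) (hψ : ψ ∈ A) (hψ_star : star ψ ∈ A)
    (F : C(OnePoint X, 𝕜)) : restrictOnePoint X 𝕜 F ∈ A := by
  set Ψ := OnePoint.continuousMapMk ψ.toContinuousMap 0 hψ_lim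
  have hΨ_inj : Function.Injective Ψ := by
    rintro (_ | x) (_ | y) h
    · rfl
    · exact absurd h.symm (hψ_ne y)
    · exact absurd h (hψ_ne x)
    · exact congrArg _ (hψ_inj h)
  have hsep : (StarAlgebra.adjoin 𝕜 {Ψ}).SeparatesPoints := fun p q hpq =>
    ⟨Ψ, ⟨Ψ, StarAlgebra.subset_adjoin 𝕜 _ rfl, rfl⟩, hΨ_inj.ne hpq⟩
  let B := A.comap (restrictOnePoint X 𝕜).toAlgHom
  have hle : (StarAlgebra.adjoin 𝕜 {Ψ}).toSubalgebra ≤ B := by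
    rw [StarAlgebra.adjoin_toSubalgebra, Algebra.adjoin_le_iff]
    rintro _ (rfl | h)
    · exact hψ
    · rw [Set.star_singleton, Set.mem_singleton_iff] at h
      subst h
      change restrictOnePoint X 𝕜 (star Ψ) ∈ A
      rwa [map_star]
  have hB : IsClosed (B : Set C(OnePoint X, 𝕜)) := hA.preimage continuous_restrictOnePoint
  have hF : F ∈ closure (StarAlgebra.adjoin 𝕜 {Ψ} : Set C(OnePoint X, 𝕜)) := by
    rw [← StarSubalgebra.topologicalClosure_coe,
      ContinuousMap.starSubalgebra_topologicalClosure_eq_top_of_separatesPoints _ hsep]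
    trivial
  exact closure_minimal hle hB hF

end OnePoint

section Cutoff

variable {X 𝕜 : Type*} [NormedAddCommGroup X] [NormedSpace ℝ X] [FiniteDimensional ℝ X]
  [RCLike 𝕜]

variable (X) in
def cutoffBump (n : ℕ) : ContDiffBump (0 : X) := ⟨n + 1, n + 2, by positivity, by linarith⟩

def cutoff (n : ℕ) : X →ᵇ 𝕜 :=
  ofNormedAddCommGroup (fun x => (cutoffBump X n x : 𝕜))
    (RCLike.continuous_ofReal.comp (cutoffBump X n).continuous) 1
    fun x => by simpa [abs_of_nonneg (cutoffBump X n).nonneg] using (cutoffBump X n).le_one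

theorem norm_cutoff_le (n : ℕ) : ‖(cutoff n : X →ᵇ 𝕜)‖ ≤ 1 :=
  norm_ofNormedAddCommGroup_le _ zero_le_one _

theorem hasCompactSupport_cutoff (n : ℕ) : HasCompactSupport (cutoff n : X →ᵇ 𝕜) :=
  (cutoffBump X n).hasCompactSupport.comp_left RCLike.ofReal_zero

theorem cutoff_eventually_eq_one (x : X) : ∀ᶠ n in atTop, (cutoff n : X →ᵇ 𝕜) x = 1 := by
  filter_upwards [tendsto_natCast_atTop_atTop.eventually_ge_atTop ‖x‖] with n hn
  have hx : x ∈ Metric.closedBall 0 (cutoffBump X n).rIn := by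
    simp only [Metric.mem_closedBall, dist_zero_right, cutoffBump]
    linarith
  simp [cutoff, (cutoffBump X n).one_of_mem_closedBall hx]

theorem exists_hasCompactSupport_tendsto (f : X →ᵇ 𝕜) :
    ∃ u : ℕ → X →ᵇ 𝕜, (∀ n, HasCompactSupport (u n)) ∧ (∀ n, ‖u n‖ ≤ ‖f‖) ∧
      ∀ x, Tendsto (fun n => u n x) atTop (𝓝 (f x)) := by
  refine ⟨fun n => f * cutoff n, fun n => ?_, fun n => ?_, fun x => ?_⟩
  · rw [coe_mul]
    exact (hasCompactSupport_cutoff n).mul_left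
  · exact (norm_mul_le f (cutoff n)).trans
      (mul_le_of_le_one_right (norm_nonneg f) (norm_cutoff_le n))
  · refine tendsto_const_nhds.congr' ?_
    filter_upwards [cutoff_eventually_eq_one (𝕜 := 𝕜) x] with n hn
    simp [hn]

theorem IsClosedUnderBoundedPointwiseLimits.subalgebra_eq_top {A : Subalgebra 𝕜 (X →ᵇ 𝕜)}
    (hA : IsClosedUnderBoundedPointwiseLimits (A : Set (X →ᵇ 𝕜))) {ψ : X →ᵇ 𝕜}
    (hψ_inj : Function.Injective ψ) (hψ_ne : ∀ x, ψ x ≠ 0)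
    (hψ_lim : Tendsto ψ (cocompact X) (𝓝 0)) (hψ : ψ ∈ A) (hψ_star : star ψ ∈ A) : A = ⊤ := by
  refine eq_top_iff.2 fun f _ => ?_
  obtain ⟨u, hu_supp, hu_norm, hu_lim⟩ := exists_hasCompactSupport_tendsto f
  refine hA u f ‖f‖ hu_norm hu_lim fun n => ?_
  rw [← coclosedCompact_eq_cocompact] at hψ_lim
  obtain ⟨F, hF⟩ := exists_restrictOnePoint_eq_of_tendsto (u n)
    (coclosedCompact_eq_cocompact (X := X) ▸ (hu_supp n).is_zero_at_infty)
  exact hF ▸ restrictOnePoint_mem hA.isClosed hψ_inj hψ_ne hψ_lim hψ hψ_star F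

end Cutoff

section Reflect

variable (X 𝕜 : Type*) [TopologicalSpace X] [Neg X] [ContinuousNeg X] [RCLike 𝕜]

def reflect : (X →ᵇ 𝕜) →⋆ₐ[𝕜] (X →ᵇ 𝕜) where
  toFun f := f.compContinuous ⟨Neg.neg, continuous_neg⟩
  map_one' := rfl
  map_mul' _ _ := rfl
  map_zero' := rfl
  map_add' _ _ := rfl
  commutes' _ := rfl
  map_star' _ := rfl

variable {X 𝕜}

@[simp]
theorem reflect_apply (f : X →ᵇ 𝕜) (x : X) : reflect X 𝕜 f x = f (-x) := rfl

theorem norm_reflect_le (f : X →ᵇ 𝕜) : ‖reflect X 𝕜 f‖ ≤ ‖f‖ := norm_compContinuous_le _ _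

theorem isClosedUnderBoundedPointwiseLimits_intertwining_reflect {E : Type*}
    [NormedAddCommGroup E] [NormedSpace 𝕜 E] (Φ : (X →ᵇ 𝕜) →ₐ[𝕜] (E →L[𝕜] E))
    (hΦ : ∀ (f : ℕ → X →ᵇ 𝕜) (g : X →ᵇ 𝕜) (C : ℝ), (∀ n, ‖f n‖ ≤ C) →
      (∀ x, Tendsto (fun n => f n x) atTop (𝓝 (g x))) →
      ∀ ξ : E, Tendsto (fun n => Φ (f n) ξ) atTop (𝓝 (Φ g ξ)))
    (T : E →L[𝕜] E) :
    IsClosedUnderBoundedPointwiseLimits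
      (Subalgebra.intertwining Φ (Φ.comp (reflect X 𝕜).toAlgHom) T : Set (X →ᵇ 𝕜)) := by
  intro u g C hC hlim hu
  ext ξ
  have hT : Tendsto (fun n => T (Φ (u n) ξ)) atTop (𝓝 (T (Φ g ξ))) :=
    (T.continuous.tendsto _).comp (hΦ u g C hC hlim ξ)
  have hreflect : Tendsto (fun n => Φ (reflect X 𝕜 (u n)) (T ξ)) atTop
      (𝓝 (Φ (reflect X 𝕜 g) (T ξ))) :=
    hΦ (fun n => reflect X 𝕜 (u n)) (reflect X 𝕜 g) C
      (fun n => (norm_reflect_le _).trans (hC n)) (fun x => hlim (-x)) (T ξ)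
  exact tendsto_nhds_unique (hT.congr fun n => congr($(hu n) ξ)) hreflect

end Reflect

section Resolvent

def resolventFun : ℝ →ᵇ ℂ :=
  ofNormedAddCommGroup (fun x : ℝ => (I + x)⁻¹)
    ((continuous_const.add continuous_ofReal).inv₀ I_add_ofReal_ne_zero) 1
    fun x => by
      rw [norm_inv]
      exact inv_le_one_of_one_le₀ (by simpa using abs_im_le_norm (I + x))

@[simp]
theorem resolventFun_apply (x : ℝ) : resolventFun x = (I + x)⁻¹ := rfl

theorem star_resolventFun_apply (x : ℝ) : star resolventFun x = (x - I)⁻¹ := by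
  change conj (I + x)⁻¹ = _
  rw [map_inv₀, map_add, conj_I, conj_ofReal, neg_add_eq_sub]

theorem reflect_resolventFun : reflect ℝ ℂ resolventFun = -star resolventFun := by
  ext x
  rw [reflect_apply, coe_neg, Pi.neg_apply, star_resolventFun_apply, resolventFun_apply,
    ← inv_neg]
  push_cast
  ring_nf

theorem star_resolventFun_eq :
    star resolventFun = resolventFun + (2 * I) • (resolventFun * star resolventFun) := by
  ext x
  have h₁ := I_add_ofReal_ne_zero x
  have h₂ : (x : ℂ) - I ≠ 0 := by simp [Complex.ext_iff]
  simp only [coe_add, coe_smul, coe_mul, Pi.add_apply, Pi.mul_apply, smul_eq_mul,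
    star_resolventFun_apply, resolventFun_apply]
  field_simp
  ring

theorem resolventFun_injective : Function.Injective resolventFun := fun x y h => by
  simpa using h

theorem resolventFun_ne_zero (x : ℝ) : resolventFun x ≠ 0 :=
  inv_ne_zero (I_add_ofReal_ne_zero x)

theorem tendsto_resolventFun_cocompact : Tendsto resolventFun (cocompact ℝ) (𝓝 0) := by
  refine tendsto_inv₀_cobounded.comp (tendsto_norm_atTop_iff_cobounded.1 ?_)
  refine tendsto_atTop_mono (fun x => ?_) tendsto_norm_cocompact_atTop
  simpa using abs_re_le_norm (I + x)

end Resolvent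

end BoundedContinuousFunction

namespace LinearPMap

theorem IsClosable.inner_closure_apply {𝕜 E F : Type*} [RCLike 𝕜] [NormedAddCommGroup E]
    [InnerProductSpace 𝕜 E] [NormedAddCommGroup F] [InnerProductSpace 𝕜 F] {D : E →ₗ.[𝕜] F}
    (hD : D.IsClosable) {w : E} {η : F} (h : ∀ ξ : D.domain, ⟪w, (ξ : E)⟫_𝕜 = ⟪η, D ξ⟫_𝕜)
    (ξ : D.closure.domain) : ⟪w, (ξ : E)⟫_𝕜 = ⟪η, D.closure ξ⟫_𝕜 := by
  let Z : Set (E × F) := {p | ⟪w, p.1⟫_𝕜 = ⟪η, p.2⟫_𝕜}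
  have hZ : _root_.IsClosed Z := isClosed_eq (continuous_const.inner continuous_fst)
    (continuous_const.inner continuous_snd)
  have hgraph : (D.graph : Set (E × F)) ⊆ Z := by
    rintro ⟨a, b⟩ hp
    obtain ⟨ζ, rfl, rfl⟩ := D.mem_graph_iff.1 hp
    exact h ζ
  have hξ : ((ξ : E), D.closure ξ) ∈ _root_.closure (D.graph : Set (E × F)) := by
    rw [← Submodule.topologicalClosure_coe, hD.graph_closure_eq_closure_graph]
    exact D.closure.mem_graph ξ
  exact closure_minimal hgraph hZ hξ

variable {H : Type*} [NormedAddCommGroup H] [InnerProductSpace ℂ H]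

theorem dense_range_add_smul [CompleteSpace H] {D : H →ₗ.[ℂ] H} (hD : D.IsClosable)
    (hsa : IsSelfAdjoint D.closure) {c : ℂ} (hc : c.im ≠ 0) :
    Dense (Set.range fun ξ : D.domain => D ξ + c • (ξ : H)) := by
  have hrange : Set.range (fun ξ : D.domain => D ξ + c • (ξ : H)) =
      LinearMap.range (D.toFun + c • D.domain.subtype) := rfl
  rw [hrange, Submodule.dense_iff_topologicalClosure_eq_top,
    Submodule.topologicalClosure_eq_top_iff, Submodule.eq_bot_iff]
  intro η hη
  have h : ∀ ξ : D.domain, ⟪-conj c • η, (ξ : H)⟫_ℂ = ⟪η, D ξ⟫_ℂ := fun ξ => by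
    have := Submodule.inner_left_of_mem_orthogonal (LinearMap.mem_range_self _ ξ) hη
    simp only [LinearMap.add_apply, LinearMap.smul_apply, Submodule.subtype_apply,
      toFun_eq_coe, inner_add_right, inner_smul_right] at this
    rw [inner_smul_left, _root_.map_neg, Complex.conj_conj]
    linear_combination -this
  have h' := hD.inner_closure_apply h
  have hmem : η ∈ D.closure†.domain := mem_adjoint_domain_of_exists _ ⟨_, h'⟩
  -- `η` is an eigenvector of the self-adjoint `D.closure` with the non-real eigenvalue `-conj c`
  have hgraph : (η, -conj c • η) ∈ D.closure.graph := by
    rw [← isSelfAdjoint_def.1 hsa, mem_graph_iff]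
    exact ⟨⟨η, hmem⟩, rfl, adjoint_apply_eq hsa.dense_domain _ h'⟩
  obtain ⟨ζ, rfl, hζ⟩ := D.closure.mem_graph_iff.1 hgraph
  have heig := h' ζ
  rw [hζ, inner_smul_left, inner_smul_right] at heig
  have hc' : c ≠ conj c := fun h => hc (Complex.conj_eq_iff_im.1 h.symm)
  have : ⟪(ζ : H), ζ⟫_ℂ = 0 := by
    by_contra hne
    exact hc' (by simpa using mul_right_cancel₀ hne heig)
  simpa using this

end LinearPMap

theorem mul_eq_neg_mul_of_anticommute {H : Type*} [NormedAddCommGroup H] [NormedSpace ℂ H]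
    {D : H →ₗ.[ℂ] H} {c : ℂ}
    (hdense : Dense (Set.range fun ξ : D.domain => D ξ + c • (ξ : H))) {T R₁ R₂ : H →L[ℂ] H}
    (hR₁ : ∀ ξ : D.domain, R₁ (D ξ + c • (ξ : H)) = ξ)
    (hR₂ : ∀ ξ : D.domain, R₂ (D ξ + (-c) • (ξ : H)) = ξ)
    (hTdom : ∀ ξ : D.domain, (T ξ : H) ∈ D.domain)
    (hanti : ∀ ξ : D.domain, T (D ξ) = - D ⟨T ξ, hTdom ξ⟩) :
    T * R₁ = -(R₂ * T) := by
  refine ContinuousLinearMap.ext_on (hdense.mono Submodule.subset_span) ?_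
  rintro _ ⟨ξ, rfl⟩
  have hT : T (D ξ + c • (ξ : H)) = -(D ⟨T ξ, hTdom ξ⟩ + (-c) • T ξ) := by
    rw [map_add, map_smul, hanti]
    module
  simp only [mul_apply_eq_comp, _root_.neg_apply, hR₁, hT, map_neg, hR₂, neg_neg]

theorem LinearPMap.apply_add_smul_eq_of_closure {H : Type*} [NormedAddCommGroup H]
    [NormedSpace ℂ H] {D : H →ₗ.[ℂ] H} {R : H → H} {c : ℂ}
    (hR : ∀ ξ : D.closure.domain, R (D.closure ξ + c • (ξ : H)) = ξ) (ξ : D.domain) :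
    R (D ξ + c • (ξ : H)) = ξ := by
  have hξ : (ξ : H) ∈ D.closure.domain := D.le_closure.1 ξ.2
  rw [show D ξ = D.closure ⟨ξ, hξ⟩ from D.le_closure.2 rfl]
  exact hR ⟨ξ, hξ⟩

theorem star_resolventFun_apply_add_neg_I_smul {H : Type*} [NormedAddCommGroup H]
    [NormedSpace ℂ H] {D : H →ₗ.[ℂ] H} {Φ : (ℝ →ᵇ ℂ) →ₐ[ℂ] (H →L[ℂ] H)}
    (hR : ∀ ξ : D.domain, Φ resolventFun (D ξ + I • (ξ : H)) = ξ) (ξ : D.domain) :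
    Φ (star resolventFun) (D ξ + (-I) • (ξ : H)) = ξ := by
  have key : Φ (star resolventFun) * (1 - (2 * I) • Φ resolventFun) = Φ resolventFun :=
    mul_one_sub_smul_eq _ (by rw [← map_mul, ← map_mul, mul_comm])
      (by rw [← map_mul, ← map_smul, ← map_add, ← star_resolventFun_eq])
  have := congr($key (D ξ + I • (ξ : H)))
  rw [mul_apply_eq_comp, _root_.sub_apply, one_apply_eq_self, _root_.smul_apply, hR] at this
  rwa [show D ξ + I • (ξ : H) - (2 * I) • (ξ : H) = D ξ + (-I) • (ξ : H) by module] at this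

end

theorem stmt6_general {H : Type*} [NormedAddCommGroup H] [InnerProductSpace ℂ H] [CompleteSpace H]
    (D : H →ₗ.[ℂ] H)
    (hclosable : D.IsClosable) (hsa : IsSelfAdjoint D.closure)
    (Φ : BoundedContinuousFunction ℝ ℂ →⋆ₐ[ℂ] (H →L[ℂ] H))
    (hΦres : ∀ ψ : BoundedContinuousFunction ℝ ℂ, (∀ x : ℝ, ψ x = (Complex.I + x)⁻¹) →
      ∀ ξ : D.closure.domain, Φ ψ (D.closure ξ + Complex.I • (ξ : H)) = ξ)
    (hΦcont : ∀ (f : ℕ → BoundedContinuousFunction ℝ ℂ) (g : BoundedContinuousFunction ℝ ℂ)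
      (C : ℝ), (∀ n, ‖f n‖ ≤ C) →
      (∀ x : ℝ, Filter.Tendsto (fun n => f n x) Filter.atTop (nhds (g x))) →
      ∀ ξ : H, Filter.Tendsto (fun n => Φ (f n) ξ) Filter.atTop (nhds (Φ g ξ)))
    (T : H →L[ℂ] H) (hTdom : ∀ ξ : D.domain, (T ξ : H) ∈ D.domain)
    (hanti : ∀ ξ : D.domain, T (D ξ) = - D ⟨T ξ, hTdom ξ⟩)
    (f : BoundedContinuousFunction ℝ ℂ) :
    ((∀ x : ℝ, f (-x) = - f x) → T ∘L Φ f = - (Φ f ∘L T)) ∧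
    ((∀ x : ℝ, f (-x) = f x) → T ∘L Φ f = Φ f ∘L T) := by
  let Φₐ : (ℝ →ᵇ ℂ) →ₐ[ℂ] (H →L[ℂ] H) := Φ
  let A := Subalgebra.intertwining Φₐ (Φₐ.comp (reflect ℝ ℂ).toAlgHom) T
  have hR := LinearPMap.apply_add_smul_eq_of_closure (hΦres _ resolventFun_apply)
  have hS := star_resolventFun_apply_add_neg_I_smul (Φ := Φₐ) hR
  have hψ : resolventFun ∈ A := by
    change T * Φ _ = Φ (reflect ℝ ℂ _) * T
    rw [reflect_resolventFun, map_neg, neg_mul]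
    exact mul_eq_neg_mul_of_anticommute (LinearPMap.dense_range_add_smul hclosable hsa (by simp))
      hR hS hTdom hanti
  have hψ_star : star resolventFun ∈ A := by
    change T * Φ _ = Φ (reflect ℝ ℂ _) * T
    rw [map_star (reflect ℝ ℂ), reflect_resolventFun, star_neg, star_star, map_neg, neg_mul]
    exact mul_eq_neg_mul_of_anticommute (LinearPMap.dense_range_add_smul hclosable hsa (by simp))
      hS (by simpa only [neg_neg] using hR) hTdom hanti
  have hA : A = ⊤ := (isClosedUnderBoundedPointwiseLimits_intertwining_reflect _ hΦcont T)
    |>.subalgebra_eq_top resolventFun_injective resolventFun_ne_zero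
      tendsto_resolventFun_cocompact hψ hψ_star
  have hf : T * Φ f = Φ (reflect ℝ ℂ f) * T := Subalgebra.mem_intertwining.1 (hA ▸ Algebra.mem_top)
  refine ⟨fun hodd => ?_, fun heven => ?_⟩
  · rwa [show reflect ℝ ℂ f = -f from ext hodd, map_neg, neg_mul] at hf
  · rwa [show reflect ℝ ℂ f = f from ext heven] at hf

theorem stmt6 {H : Type*} [NormedAddCommGroup H] [InnerProductSpace ℂ H] [CompleteSpace H]
    (D : H →ₗ.[ℂ] H) (hdense : Dense (D.domain : Set H))
    (hsym : ∀ ξ η : D.domain, ⟪D ξ, (η : H)⟫_ℂ = ⟪(ξ : H), D η⟫_ℂ)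
    (hclosable : D.IsClosable) (hsa : IsSelfAdjoint D.closure)
    (Φ : BoundedContinuousFunction ℝ ℂ →⋆ₐ[ℂ] (H →L[ℂ] H))
    (hΦres : ∀ ψ : BoundedContinuousFunction ℝ ℂ, (∀ x : ℝ, ψ x = (Complex.I + x)⁻¹) →
      ∀ ξ : D.closure.domain, Φ ψ (D.closure ξ + Complex.I • (ξ : H)) = ξ)
    (hΦcont : ∀ (f : ℕ → BoundedContinuousFunction ℝ ℂ) (g : BoundedContinuousFunction ℝ ℂ)
      (C : ℝ), (∀ n, ‖f n‖ ≤ C) →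
      (∀ x : ℝ, Filter.Tendsto (fun n => f n x) Filter.atTop (nhds (g x))) →
      ∀ ξ : H, Filter.Tendsto (fun n => Φ (f n) ξ) Filter.atTop (nhds (Φ g ξ)))
    (T : H →L[ℂ] H) (hTdom : ∀ ξ : D.domain, (T ξ : H) ∈ D.domain)
    (hanti : ∀ ξ : D.domain, T (D ξ) = - D ⟨T ξ, hTdom ξ⟩)
    (f : BoundedContinuousFunction ℝ ℂ) :
    ((∀ x : ℝ, f (-x) = - f x) → T ∘L Φ f = - (Φ f ∘L T)) ∧
    ((∀ x : ℝ, f (-x) = f x) → T ∘L Φ f = Φ f ∘L T) :=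
  stmt6_general D hclosable hsa Φ hΦres hΦcont T hTdom hanti f
end

section
/- Let h : ℝ → ℂ be an even integrable function. Then the principal-value functional φ ↦ lim_{ε→0⁺} (∫_{−∞}^{−ε} (h(t)/t)φ(t) dt + ∫_ε^∞ (h(t)/t)φ(t) dt), initially defined on compactly supported smooth functions, extends to a continuous linear functional on the Schwartz space S(ℝ), and satisfies |⟨pv(h(t)/t), φ⟩| ≤ ‖h‖_{L¹} · sup_t |φ'(t)| for all φ ∈ S(ℝ). -/
/-!
For even `h` the kernel `h t / t` is odd, so on `{t | ε ≤ |t|}` the test function `φ t` may be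
replaced by `φ t - φ 0 = t * dslope φ 0 t`. The truncated integrals then become integrals of
`h t * dslope φ 0 t`, and by the mean value inequality `‖dslope φ 0 t‖ ≤ sup ‖φ'‖`. Dominated
convergence gives the limit `ε → 0⁺`, and the same bound makes the limit functional continuous for
the Schwartz seminorm of order `(0, 1)`.
-/
open MeasureTheory Filter Topology

section DSlope

variable {𝕜 E : Type*} [NontriviallyNormedField 𝕜] [NormedAddCommGroup E] [NormedSpace 𝕜 E]
  {f g : 𝕜 → E} {a : 𝕜}

theorem dslope_add (hf : DifferentiableAt 𝕜 f a) (hg : DifferentiableAt 𝕜 g a) (b : 𝕜) :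
    dslope (f + g) a b = dslope f a b + dslope g a b := by
  rcases eq_or_ne b a with rfl | hb
  · simp only [dslope_same, deriv_add hf hg]
  · simp only [dslope_of_ne _ hb, slope_def_module, Pi.add_apply, add_sub_add_comm, smul_add]

theorem dslope_const_smul {R : Type*} [Monoid R] [DistribMulAction R E] [SMulCommClass 𝕜 R E]
    [ContinuousConstSMul R E] (c : R) (hf : DifferentiableAt 𝕜 f a) (b : 𝕜) :
    dslope (c • f) a b = c • dslope f a b := by
  rcases eq_or_ne b a with rfl | hb
  · simp only [dslope_same, deriv_const_smul c hf]
  · simp only [dslope_of_ne _ hb, slope_def_module, Pi.smul_apply, ← smul_sub, smul_comm _ c]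

theorem Differentiable.continuous_dslope (hf : Differentiable 𝕜 f) : Continuous (dslope f a) := by
  refine continuous_iff_continuousAt.2 fun b => ?_
  rcases eq_or_ne b a with rfl | hb
  · exact continuousAt_dslope_same.2 (hf b)
  · exact (continuousAt_dslope_of_ne hb).2 (hf b).continuousAt

end DSlope

theorem norm_dslope_le_of_norm_deriv_le {𝕜 E : Type*} [RCLike 𝕜] [NormedAddCommGroup E]
    [NormedSpace 𝕜 E] {f : 𝕜 → E} (hf : Differentiable 𝕜 f) {B : ℝ} (hB : ∀ t, ‖deriv f t‖ ≤ B)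
    (a b : 𝕜) : ‖dslope f a b‖ ≤ B := by
  rcases eq_or_ne b a with rfl | hb
  · simpa only [dslope_same] using hB b
  · have hmvt := convex_univ.norm_image_sub_le_of_norm_deriv_le (fun x _ => hf x)
      (fun x _ => hB x) (Set.mem_univ a) (Set.mem_univ b)
    rw [dslope_of_ne _ hb, slope_def_module, norm_smul, norm_inv, ← div_eq_inv_mul,
      div_le_iff₀ (norm_pos_iff.2 (sub_ne_zero.2 hb))]
    exact hmvt

theorem SchwartzMap.norm_deriv_le_seminorm (𝕜 : Type*) [NormedField 𝕜] {F : Type*}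
    [NormedAddCommGroup F] [NormedSpace ℝ F] [NormedSpace 𝕜 F] [SMulCommClass ℝ 𝕜 F]
    (φ : SchwartzMap ℝ F) (t : ℝ) : ‖deriv φ t‖ ≤ SchwartzMap.seminorm 𝕜 0 1 φ := by
  rw [← iteratedDeriv_one, ← norm_iteratedFDeriv_eq_norm_iteratedDeriv]
  exact φ.norm_iteratedFDeriv_le_seminorm 𝕜 1 t

section OddIntegral

variable {G E : Type*} [MeasurableSpace G] [AddGroup G] [MeasurableNeg G] [NormedAddCommGroup E]
  [NormedSpace ℝ E] (μ : Measure G) [μ.IsNegInvariant] {f : G → E}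

theorem Function.Odd.integral_eq_zero (hf : f.Odd) : ∫ x, f x ∂μ = 0 := by
  have hneg : ∫ x, f x ∂μ = -∫ x, f x ∂μ := by
    conv_lhs => rw [← integral_neg_eq_self]
    simp only [hf.eq, integral_neg]
  have htwice : (2 : ℝ) • ∫ x, f x ∂μ = 0 := by
    rw [two_smul]
    nth_rewrite 2 [hneg]
    exact add_neg_cancel _
  exact (smul_eq_zero.1 htwice).resolve_left two_ne_zero

theorem Function.Odd.setIntegral_eq_zero (hf : f.Odd) {s : Set G} (hs : MeasurableSet s)
    (hsymm : ∀ x, -x ∈ s ↔ x ∈ s) : ∫ x in s, f x ∂μ = 0 := by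
  rw [← integral_indicator hs]
  refine Function.Odd.integral_eq_zero μ fun x => ?_
  by_cases hx : x ∈ s
  · simp only [Set.indicator_of_mem hx, Set.indicator_of_mem ((hsymm x).2 hx), hf.eq]
  · simp only [Set.indicator_of_notMem hx, Set.indicator_of_notMem (mt (hsymm x).1 hx), neg_zero]

end OddIntegral

theorem tendsto_setIntegral_le_abs_nhdsGT_zero {E : Type*} [NormedAddCommGroup E]
    [NormedSpace ℝ E] {μ : Measure ℝ} [NullSingletonClass μ] {g : ℝ → E} (hg : Integrable g μ) :
    Tendsto (fun ε => ∫ t in {t | ε ≤ |t|}, g t ∂μ) (𝓝[>] 0) (𝓝 (∫ t, g t ∂μ)) := by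
  have hmeas (ε : ℝ) : MeasurableSet {t : ℝ | ε ≤ |t|} :=
    measurableSet_le measurable_const measurable_abs
  simp_rw [← integral_indicator (hmeas _)]
  refine tendsto_integral_filter_of_dominated_convergence (fun t => ‖g t‖)
    (Eventually.of_forall fun ε => hg.1.indicator (hmeas ε))
    (Eventually.of_forall fun ε => Eventually.of_forall fun t => norm_indicator_le_norm_self _ _)
    hg.norm ?_
  filter_upwards [Measure.ae_ne μ 0] with t ht
  refine tendsto_const_nhds.congr' ?_
  filter_upwards [Ioo_mem_nhdsGT (abs_pos.2 ht)] with ε hε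
  exact (Set.indicator_of_mem (s := {t : ℝ | ε ≤ |t|}) hε.2.le g).symm

section PrincipalValue

variable {μ : Measure ℝ} {h : ℝ → ℂ}

theorem MeasureTheory.Integrable.mul_dslope (hh : Integrable h μ) {φ : ℝ → ℂ}
    (hφ : Differentiable ℝ φ) {B : ℝ} (hB : ∀ t, ‖deriv φ t‖ ≤ B) :
    Integrable (fun t => h t * dslope φ 0 t) μ :=
  hh.mul_bdd hφ.continuous_dslope.aestronglyMeasurable
    (Eventually.of_forall (norm_dslope_le_of_norm_deriv_le hφ hB 0))

theorem norm_integral_mul_dslope_le (hh : Integrable h μ) {φ : ℝ → ℂ} (hφ : Differentiable ℝ φ)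
    {B : ℝ} (hB : ∀ t, ‖deriv φ t‖ ≤ B) :
    ‖∫ t, h t * dslope φ 0 t ∂μ‖ ≤ (∫ t, ‖h t‖ ∂μ) * B := by
  rw [← integral_mul_const]
  refine norm_integral_le_of_norm_le (hh.norm.mul_const B) (Eventually.of_forall fun t => ?_)
  rw [norm_mul]
  exact mul_le_mul_of_nonneg_left (norm_dslope_le_of_norm_deriv_le hφ hB 0 t) (norm_nonneg _)

theorem MeasureTheory.Integrable.integrableOn_div_of_le_abs (hh : Integrable h μ) {ε : ℝ}
    (hε : 0 < ε) :
    IntegrableOn (fun t => h t / t) {t | ε ≤ |t|} μ := by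
  simp_rw [div_eq_mul_inv]
  refine hh.restrict.mul_bdd (c := ε⁻¹) Complex.measurable_ofReal.inv.aestronglyMeasurable
    (ae_restrict_of_forall_mem (measurableSet_le measurable_const measurable_abs) fun t ht => ?_)
  rw [norm_inv, Complex.norm_real, Real.norm_eq_abs]
  exact inv_anti₀ hε ht

theorem setIntegral_div_mul_eq_setIntegral_mul_dslope (hh : Integrable h) (heven : h.Even)
    {φ : ℝ → ℂ} (hφ : Integrable (fun t => h t * dslope φ 0 t)) {ε : ℝ} (hε : 0 < ε) :
    ∫ t in {t | ε ≤ |t|}, h t / t * φ t = ∫ t in {t | ε ≤ |t|}, h t * dslope φ 0 t := by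
  have hs : MeasurableSet {t : ℝ | ε ≤ |t|} := measurableSet_le measurable_const measurable_abs
  have hodd : ∫ t in {t | ε ≤ |t|}, h t / t = 0 :=
    Function.Odd.setIntegral_eq_zero volume
      (fun t => by simp only [heven.eq, Complex.ofReal_neg, div_neg]) hs
      fun t => by simp only [Set.mem_ofPred_eq, abs_neg]
  have hsplit : ∀ t ∈ {t : ℝ | ε ≤ |t|},
      h t / t * φ t = h t * dslope φ 0 t + φ 0 * (h t / t) := by
    intro t ht
    have ht0 : t ≠ 0 := abs_pos.1 (hε.trans_le ht)
    have ht0' : (t : ℂ) ≠ 0 := Complex.ofReal_ne_zero.2 ht0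
    rw [dslope_of_ne _ ht0, slope_def_module, Complex.real_smul, sub_zero, Complex.ofReal_inv]
    field_simp
    ring
  rw [setIntegral_congr_fun hs hsplit, integral_add hφ.integrableOn
    ((hh.integrableOn_div_of_le_abs hε).const_mul _), integral_const_mul, hodd, mul_zero, add_zero]

end PrincipalValue

/-- For even `h`, this is the continuous extension of `pv (h t / t)` to Schwartz functions. -/
noncomputable def dslopeIntegralCLM (h : ℝ → ℂ) (hh : Integrable h) : SchwartzMap ℝ ℂ →L[ℂ] ℂ :=
  SchwartzMap.mkCLMtoNormedSpace (σ := RingHom.id ℂ) (fun φ => ∫ t, h t * dslope φ 0 t)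
    (fun φ ψ => by
      simp only [FunLike.coe_add, dslope_add φ.differentiableAt ψ.differentiableAt, mul_add]
      exact integral_add (hh.mul_dslope φ.differentiable (φ.norm_deriv_le_seminorm ℂ))
        (hh.mul_dslope ψ.differentiable (ψ.norm_deriv_le_seminorm ℂ)))
    (fun c φ => by
      simp only [FunLike.coe_smul, dslope_const_smul c φ.differentiableAt, smul_eq_mul,
        RingHom.id_apply, mul_left_comm _ c, integral_const_mul])
    ⟨{(0, 1)}, ∫ t, ‖h t‖, integral_nonneg fun _ => norm_nonneg _, fun φ => by
      simpa only [Finset.sup_singleton, SchwartzMap.schwartzSeminormFamily_apply] using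
        norm_integral_mul_dslope_le hh φ.differentiable (φ.norm_deriv_le_seminorm ℂ)⟩

theorem dslopeIntegralCLM_apply {h : ℝ → ℂ} (hh : Integrable h) (φ : SchwartzMap ℝ ℂ) :
    dslopeIntegralCLM h hh φ = ∫ t, h t * dslope φ 0 t :=
  rfl

theorem stmt8 (h : ℝ → ℂ) (hint : Integrable h) (heven : ∀ t, h (-t) = h t) :
    ∃ T : SchwartzMap ℝ ℂ →L[ℂ] ℂ,
      (∀ φ : SchwartzMap ℝ ℂ,
        Filter.Tendsto (fun ε : ℝ => ∫ t in {t : ℝ | ε ≤ |t|}, (h t / t) * φ t)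
          (nhdsWithin 0 (Set.Ioi 0)) (nhds (T φ))) ∧
      (∀ (φ : SchwartzMap ℝ ℂ) (B : ℝ), (∀ t, ‖deriv (fun s : ℝ => φ s) t‖ ≤ B) →
        ‖T φ‖ ≤ (∫ t, ‖h t‖) * B) := by
  refine ⟨dslopeIntegralCLM h hint, fun φ => ?_, fun φ B hB => ?_⟩
  · have hφ := hint.mul_dslope φ.differentiable (φ.norm_deriv_le_seminorm ℂ)
    rw [dslopeIntegralCLM_apply]
    refine (tendsto_setIntegral_le_abs_nhdsGT_zero hφ).congr' ?_
    filter_upwards [self_mem_nhdsWithin] with ε hε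
    exact (setIntegral_div_mul_eq_setIntegral_mul_dslope hint heven hφ hε).symm
  · rw [dslopeIntegralCLM_apply]
    exact norm_integral_mul_dslope_le hint φ.differentiable hB
end

section
/- Schur's test: Let k : ℝⁿ × ℝⁿ → ℂ be a measurable kernel such that sup_x ∫|k(x,y)| dy ≤ α and sup_y ∫|k(x,y)| dx ≤ β. Then the integral operator (Tu)(x) = ∫ k(x,y)u(y) dy defines a bounded operator on L²(ℝⁿ) with operator norm at most √(αβ). -/
/-!
Cauchy–Schwarz with the weight `|k(x, ·)|` gives `|Tu(x)|² ≤ α ∫ |k(x,y)| |u(y)|² dy`.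
Integrating in `x` and exchanging the order of integration (Tonelli), the column bound turns
this into `‖Tu‖₂² ≤ α β ‖u‖₂²`. The same estimate, applied to `∫ |k(x,y)| |u(y)| dy`, shows that
the integral defining `Tu(x)` converges absolutely for almost every `x`.
-/

open Function ENNReal

namespace MeasureTheory

variable {X Y : Type*} [MeasurableSpace X] [MeasurableSpace Y] {μ : Measure X} {ν : Measure Y}

theorem sq_lintegral_mul_le_lintegral_mul_lintegral_mul_sq {w g : Y → ℝ≥0∞}
    (hw : AEMeasurable w ν) (hg : AEMeasurable g ν) :
    (∫⁻ y, w y * g y ∂ν) ^ 2 ≤ (∫⁻ y, w y ∂ν) * ∫⁻ y, w y * g y ^ 2 ∂ν := by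
  have hsq : ∀ a : ℝ≥0∞, (a ^ (1 / 2 : ℝ)) ^ 2 = a := fun a ↦ by
    rw [← ENNReal.rpow_natCast, ← ENNReal.rpow_mul]; norm_num
  have hint : ∀ y, w y ^ (1 / 2 : ℝ) * (w y * g y ^ 2) ^ (1 / 2 : ℝ) = w y * g y := fun y ↦ by
    rw [ENNReal.mul_rpow_of_nonneg _ _ (by norm_num), ← mul_assoc,
      ← ENNReal.rpow_add_of_nonneg _ _ (by norm_num) (by norm_num), ← ENNReal.rpow_natCast,
      ← ENNReal.rpow_mul]
    norm_num
  have h : ∫⁻ y, w y * g y ∂ν ≤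
      (∫⁻ y, w y ∂ν) ^ (1 / 2 : ℝ) * (∫⁻ y, w y * g y ^ 2 ∂ν) ^ (1 / 2 : ℝ) := by
    rw [← lintegral_congr hint]
    exact ENNReal.lintegral_mul_norm_pow_le hw (hw.mul (hg.pow_const 2)) (by norm_num) (by norm_num)
      (by norm_num)
  calc (∫⁻ y, w y * g y ∂ν) ^ 2
      ≤ ((∫⁻ y, w y ∂ν) ^ (1 / 2 : ℝ) * (∫⁻ y, w y * g y ^ 2 ∂ν) ^ (1 / 2 : ℝ)) ^ 2 := by gcongr
    _ = _ := by rw [mul_pow, hsq, hsq]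

theorem lintegral_sq_lintegral_mul_le [SFinite μ] [SFinite ν] {K : X → Y → ℝ≥0∞}
    (hK : Measurable (uncurry K)) {A B : ℝ≥0∞} (hrow : ∀ x, ∫⁻ y, K x y ∂ν ≤ A)
    (hcol : ∀ y, ∫⁻ x, K x y ∂μ ≤ B) {g : Y → ℝ≥0∞} (hg : AEMeasurable g ν) :
    ∫⁻ x, (∫⁻ y, K x y * g y ∂ν) ^ 2 ∂μ ≤ A * B * ∫⁻ y, g y ^ 2 ∂ν := by
  have hKg : AEMeasurable (uncurry fun x y ↦ K x y * g y ^ 2) (μ.prod ν) :=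
    hK.aemeasurable.mul (hg.pow_const 2).comp_snd
  calc ∫⁻ x, (∫⁻ y, K x y * g y ∂ν) ^ 2 ∂μ
      ≤ ∫⁻ x, A * ∫⁻ y, K x y * g y ^ 2 ∂ν ∂μ := by
        gcongr with x
        exact (sq_lintegral_mul_le_lintegral_mul_lintegral_mul_sq
          (hK.of_uncurry_left.aemeasurable) hg).trans (by gcongr; exact hrow x)
    _ = A * ∫⁻ y, g y ^ 2 * ∫⁻ x, K x y ∂μ ∂ν := by
        rw [lintegral_const_mul'' _ hKg.lintegral_prod_right, lintegral_lintegral_swap hKg]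
        simp_rw [mul_comm (K _ _), lintegral_const_mul'' _ hK.of_uncurry_right.aemeasurable]
    _ ≤ A * ∫⁻ y, g y ^ 2 * B ∂ν := by gcongr with y; exact hcol y
    _ = A * B * ∫⁻ y, g y ^ 2 ∂ν := by
        rw [lintegral_mul_const'' _ (hg.pow_const 2), mul_assoc, mul_comm B]

theorem eLpNorm_two_sq {E : Type*} [NormedAddCommGroup E] (f : Y → E) :
    eLpNorm f 2 ν ^ 2 = ∫⁻ y, ‖f y‖ₑ ^ 2 ∂ν := by
  simpa using eLpNorm_nnreal_pow_eq_lintegral (f := f) (μ := ν) (p := 2) two_ne_zero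

section KernelOperator

variable [SFinite μ] [SFinite ν] {𝕜 : Type*} [RCLike 𝕜] {k : X → Y → 𝕜} {A B : NNReal}

theorem lintegral_sq_lintegral_enorm_kernel_mul_le (hk : Measurable (uncurry k))
    (hrow : ∀ x, ∫⁻ y, ‖k x y‖ₑ ∂ν ≤ A) (hcol : ∀ y, ∫⁻ x, ‖k x y‖ₑ ∂μ ≤ B) {f : Y → 𝕜}
    (hf : AEMeasurable f ν) :
    ∫⁻ x, (∫⁻ y, ‖k x y * f y‖ₑ ∂ν) ^ 2 ∂μ ≤ (NNReal.sqrt (A * B) * eLpNorm f 2 ν) ^ 2 := by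
  have hAB : ((NNReal.sqrt (A * B) : ℝ≥0∞)) ^ 2 = A * B := by
    rw [← ENNReal.coe_pow, NNReal.sq_sqrt, ENNReal.coe_mul]
  simpa only [enorm_mul, mul_pow, hAB, eLpNorm_two_sq] using
    lintegral_sq_lintegral_mul_le hk.enorm hrow hcol hf.enorm

theorem ae_integrable_kernel_mul (hk : Measurable (uncurry k))
    (hrow : ∀ x, ∫⁻ y, ‖k x y‖ₑ ∂ν ≤ A) (hcol : ∀ y, ∫⁻ x, ‖k x y‖ₑ ∂μ ≤ B) {f : Y → 𝕜}
    (hf : MemLp f 2 ν) : ∀ᵐ x ∂μ, Integrable (fun y ↦ k x y * f y) ν := by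
  have hkf : AEStronglyMeasurable (uncurry fun x y ↦ k x y * f y) (μ.prod ν) :=
    hk.aestronglyMeasurable.mul hf.aestronglyMeasurable.comp_snd
  have hfin : ∀ᵐ x ∂μ, (∫⁻ y, ‖k x y * f y‖ₑ ∂ν) ^ 2 < ∞ := by
    refine ae_lt_top' (hkf.enorm.lintegral_prod_right.pow_const 2) ?_
    exact ((lintegral_sq_lintegral_enorm_kernel_mul_le hk hrow hcol hf.aemeasurable).trans_lt
      (pow_lt_top (mul_lt_top coe_lt_top hf.eLpNorm_lt_top))).ne
  filter_upwards [hfin, hkf.prodMk_left] with x hx hmeas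
  exact ⟨hmeas, hasFiniteIntegral_iff_enorm.2 (by simpa using hx)⟩

theorem eLpNorm_integral_kernel_mul_le (hk : Measurable (uncurry k))
    (hrow : ∀ x, ∫⁻ y, ‖k x y‖ₑ ∂ν ≤ A) (hcol : ∀ y, ∫⁻ x, ‖k x y‖ₑ ∂μ ≤ B) {f : Y → 𝕜}
    (hf : AEMeasurable f ν) :
    eLpNorm (fun x ↦ ∫ y, k x y * f y ∂ν) 2 μ ≤ NNReal.sqrt (A * B) * eLpNorm f 2 ν := by
  refine (ENNReal.pow_le_pow_left_iff two_ne_zero).1 ?_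
  calc eLpNorm (fun x ↦ ∫ y, k x y * f y ∂ν) 2 μ ^ 2
      = ∫⁻ x, ‖∫ y, k x y * f y ∂ν‖ₑ ^ 2 ∂μ := eLpNorm_two_sq _
    _ ≤ ∫⁻ x, (∫⁻ y, ‖k x y * f y‖ₑ ∂ν) ^ 2 ∂μ := by
        gcongr with x
        exact enorm_integral_le_lintegral_enorm _
    _ ≤ _ := lintegral_sq_lintegral_enorm_kernel_mul_le hk hrow hcol hf

theorem memLp_integral_kernel_mul (hk : Measurable (uncurry k))
    (hrow : ∀ x, ∫⁻ y, ‖k x y‖ₑ ∂ν ≤ A) (hcol : ∀ y, ∫⁻ x, ‖k x y‖ₑ ∂μ ≤ B) {f : Y → 𝕜}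
    (hf : MemLp f 2 ν) : MemLp (fun x ↦ ∫ y, k x y * f y ∂ν) 2 μ :=
  ⟨(hk.aestronglyMeasurable.mul hf.aestronglyMeasurable.comp_snd).integral_prod_right',
    (eLpNorm_integral_kernel_mul_le hk hrow hcol hf.aemeasurable).trans_lt
      (mul_lt_top coe_lt_top hf.eLpNorm_lt_top)⟩

noncomputable def integralOperator (hk : Measurable (uncurry k))
    (hrow : ∀ x, ∫⁻ y, ‖k x y‖ₑ ∂ν ≤ A) (hcol : ∀ y, ∫⁻ x, ‖k x y‖ₑ ∂μ ≤ B) :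
    Lp 𝕜 2 ν →L[𝕜] Lp 𝕜 2 μ :=
  LinearMap.mkContinuous
    { toFun u := (memLp_integral_kernel_mul hk hrow hcol (Lp.memLp u)).toLp
      map_add' u v := by
        rw [← MemLp.toLp_add]
        refine MemLp.toLp_congr _ _ ?_
        filter_upwards [ae_integrable_kernel_mul hk hrow hcol (Lp.memLp u),
          ae_integrable_kernel_mul hk hrow hcol (Lp.memLp v)] with x hu hv
        rw [Pi.add_apply, ← integral_add hu hv]
        refine integral_congr_ae ((Lp.coeFn_add u v).mono fun y hy ↦ ?_)
        simp only [hy, Pi.add_apply, mul_add]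
      map_smul' c u := by
        rw [RingHom.id_apply, ← MemLp.toLp_const_smul]
        refine MemLp.toLp_congr _ _ (.of_forall fun x ↦ ?_)
        rw [Pi.smul_apply, ← integral_smul]
        refine integral_congr_ae ((Lp.coeFn_smul c u).mono fun y hy ↦ ?_)
        simp only [hy, Pi.smul_apply, smul_eq_mul, mul_left_comm] }
    (NNReal.sqrt (A * B)) fun u ↦ by
      rw [LinearMap.coe_mk, AddHom.coe_mk, Lp.norm_toLp, Lp.norm_def, ← coe_toReal,
        ← toReal_mul]
      exact toReal_mono (mul_ne_top coe_ne_top (Lp.eLpNorm_ne_top u))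
        (eLpNorm_integral_kernel_mul_le hk hrow hcol (Lp.aestronglyMeasurable u).aemeasurable)

theorem integralOperator_apply_ae (hk : Measurable (uncurry k))
    (hrow : ∀ x, ∫⁻ y, ‖k x y‖ₑ ∂ν ≤ A) (hcol : ∀ y, ∫⁻ x, ‖k x y‖ₑ ∂μ ≤ B) (u : Lp 𝕜 2 ν) :
    integralOperator hk hrow hcol u =ᵐ[μ] fun x ↦ ∫ y, k x y * u y ∂ν :=
  MemLp.coeFn_toLp (memLp_integral_kernel_mul hk hrow hcol (Lp.memLp u))

theorem norm_integralOperator_le (hk : Measurable (uncurry k))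
    (hrow : ∀ x, ∫⁻ y, ‖k x y‖ₑ ∂ν ≤ A) (hcol : ∀ y, ∫⁻ x, ‖k x y‖ₑ ∂μ ≤ B) :
    ‖integralOperator hk hrow hcol‖ ≤ NNReal.sqrt (A * B) :=
  LinearMap.mkContinuous_norm_le _ (NNReal.sqrt (A * B)).2 _

end KernelOperator

end MeasureTheory

open MeasureTheory

theorem sqrt_toNNReal_mul_toNNReal_le (a b : ℝ) :
    (NNReal.sqrt (a.toNNReal * b.toNNReal) : ℝ) ≤ √(a * b) := by
  rcases le_total 0 a with ha | ha <;> rcases le_total 0 b with hb | hb <;>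
    simp [Real.toNNReal_of_nonpos, ha, hb]
  all_goals positivity

theorem stmt16_general (n : ℕ) (k : (Fin n → ℝ) → (Fin n → ℝ) → ℂ)
    (hk : Measurable (Function.uncurry k)) (α β : ℝ)
    (hrow : ∀ x, ∫⁻ y, ‖k x y‖₊ ∂volume ≤ ENNReal.ofReal α)
    (hcol : ∀ y, ∫⁻ x, ‖k x y‖₊ ∂volume ≤ ENNReal.ofReal β) :
    ∃ T : Lp ℂ 2 (volume : Measure (Fin n → ℝ)) →L[ℂ] Lp ℂ 2 (volume : Measure (Fin n → ℝ)),
      ‖T‖ ≤ Real.sqrt (α * β) ∧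
      ∀ u : Lp ℂ 2 (volume : Measure (Fin n → ℝ)),
        (∀ᵐ x : Fin n → ℝ, Integrable (fun y => k x y * u y)) ∧
        (∀ᵐ x : Fin n → ℝ, T u x = ∫ y, k x y * u y) :=
  -- `ENNReal.ofReal α` is `↑α.toNNReal` by definition, so the bounds apply with `A = α.toNNReal`.
  ⟨integralOperator hk hrow hcol,
    (norm_integralOperator_le hk hrow hcol).trans (sqrt_toNNReal_mul_toNNReal_le α β),
    fun u ↦ ⟨ae_integrable_kernel_mul hk hrow hcol (Lp.memLp u),
      integralOperator_apply_ae hk hrow hcol u⟩⟩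

theorem stmt16 (n : ℕ) (k : (Fin n → ℝ) → (Fin n → ℝ) → ℂ)
    (hk : Measurable (Function.uncurry k)) (α β : ℝ) (hα : 0 ≤ α) (hβ : 0 ≤ β)
    (hrow : ∀ x, ∫⁻ y, ‖k x y‖₊ ∂volume ≤ ENNReal.ofReal α)
    (hcol : ∀ y, ∫⁻ x, ‖k x y‖₊ ∂volume ≤ ENNReal.ofReal β) :
    ∃ T : Lp ℂ 2 (volume : Measure (Fin n → ℝ)) →L[ℂ] Lp ℂ 2 (volume : Measure (Fin n → ℝ)),
      ‖T‖ ≤ Real.sqrt (α * β) ∧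
      ∀ u : Lp ℂ 2 (volume : Measure (Fin n → ℝ)),
        (∀ᵐ x : Fin n → ℝ, Integrable (fun y => k x y * u y)) ∧
        (∀ᵐ x : Fin n → ℝ, T u x = ∫ y, k x y * u y) :=
  stmt16_general n k hk α β hrow hcol
end
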